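/- Let N ≥ 2, α, β, ψ ∈ ℝ, ε > 0, and let Q1, Q2 ≥ 1 with Q1 + Q2 = N, q1 = Q1/N, q2 = Q2/N. Let a ∈ ℝ^N be such that a_i ∈ {0, π} for exactly Q1 indices i and a_i ∈ {ψ, ψ+π} for the remaining Q2 indices. Then the characteristic polynomial of the linearization matrix J(a) equals X · (X + ε)^{N(N−1)+1} · P1(X)^{Q1−1} · P2(X)^{Q2−1} · P3(X), where P1(X) = X² + (1/2)(sin(α−β) − q1 sin(α+β) − q2 sin(−2ψ+α+β) + 2ε) X − ε q1 sin(α+β) − ε q2 sin(−2ψ+α+β), P2(X) = X² + (1/2)(sin(α−β) − q1 sin(2ψ+α+β) − q2 sin(α+β) + 2ε) X − ε q1 sin(2ψ+α+β) − ε q2 sin(α+β), and P3(X) = X² + (1/2)(sin(α−β) − q1 sin(2ψ+α+β) − q2 sin(−2ψ+α+β) + 2ε) X − ε q1 sin(2ψ+α+β) − ε q2 sin(−2ψ+α+β). -/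

import Mathlib

/-!
Eliminating the `N²` coupling variables by a Schur complement gives
`charpoly J · (X + ε)^N = (X + ε)^(N²) · det M` with `M = (X + ε)(X - A) - BC`. At a double
antipodal state `sin (2 (aᵢ - aⱼ) + α + β)` only depends on the clusters of `i` and `j`, since
phases only matter modulo `π`. Hence `M` is a diagonal matrix, constant on each cluster, plus a
matrix that is constant on cluster blocks, and the matrix determinant lemma reduces `det M` to
`P₁^(Q₁ - 1) P₂^(Q₂ - 1)` times a `2 × 2` determinant, which factors as `X (X + ε) P₃`.
-/

open Real Matrix Polynomial

/-- The phase block of the linearization of the adaptive phase-oscillator network at a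
one-cluster state with phase lags `a`. -/
noncomputable def linA (N : ℕ) (α β : ℝ) (a : Fin N → ℝ) : Matrix (Fin N) (Fin N) ℝ :=
  Matrix.of fun i j =>
    if i = j then
      -(1 / 2) * Real.sin (α - β) - (1 / (N : ℝ)) * Real.sin β * Real.cos α
        + (1 / (2 * (N : ℝ))) * ∑ k, Real.sin (2 * (a i - a k) + α + β)
    else (1 / (2 * (N : ℝ))) * (Real.sin (α - β) - Real.sin (2 * (a i - a j) + α + β))

/-- The phase-to-coupling block of the linearization. -/
noncomputable def linB (N : ℕ) (α : ℝ) (a : Fin N → ℝ) :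
    Matrix (Fin N) (Fin N × Fin N) ℝ :=
  Matrix.of fun k p =>
    if k = p.1 then -(1 / (N : ℝ)) * Real.sin (a p.1 - a p.2 + α) else 0

/-- The coupling-to-phase block of the linearization. -/
noncomputable def linC (N : ℕ) (β ε : ℝ) (a : Fin N → ℝ) :
    Matrix (Fin N × Fin N) (Fin N) ℝ :=
  Matrix.of fun p l =>
    if p.1 = p.2 then 0
    else if l = p.1 then -ε * Real.cos (a p.1 - a p.2 + β)
    else if l = p.2 then ε * Real.cos (a p.1 - a p.2 + β)
    else 0

/-- The linearization matrix `J(a)` of the adaptive phase-oscillator network at a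
one-cluster state with phase lags `a`. -/
noncomputable def linJ (N : ℕ) (α β ε : ℝ) (a : Fin N → ℝ) :
    Matrix (Fin N ⊕ Fin N × Fin N) (Fin N ⊕ Fin N × Fin N) ℝ :=
  Matrix.fromBlocks (linA N α β a) (linB N α a) (linC N β ε a)
    (-(ε • (1 : Matrix (Fin N × Fin N) (Fin N × Fin N) ℝ)))

open Finset

section ClusterDeterminant

variable {ι κ : Type*} [Fintype ι] [DecidableEq ι] [Fintype κ] [DecidableEq κ]

theorem map_diagonal_add_of {n R S : Type*} [DecidableEq n] [NonAssocSemiring R]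
    [NonAssocSemiring S] (f : R →+* S) (d : n → R) (F : n → n → R) :
    (diagonal d + of F).map f = diagonal (f ∘ d) + of fun i j => f (F i j) := by
  ext i j; simp [diagonal_apply, apply_ite f]

omit [DecidableEq ι] in
@[to_additive]
theorem prod_comp_eq_prod_pow_card {M : Type*} [CommMonoid M] (g : ι → κ) (f : κ → M) :
    ∏ i, f (g i) = ∏ k, f k ^ #{i | g i = k} := by
  simp [← Finset.prod_fiberwise' univ g f, prod_const]

theorem det_diagonal_comp_add_mul_prod {K : Type*} [Field K] (g : ι → κ) (P : κ → K)
    (E : κ → κ → K) (hP : ∀ k, P k ≠ 0) :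
    (diagonal (P ∘ g) + of fun i j => E (g i) (g j)).det * ∏ k, P k =
      (∏ k, P k ^ #{i | g i = k}) *
        (diagonal P + of fun k l => (#{i | g i = k} : K) * E k l).det := by
  -- The matrix is `D + U * V` with `D = diagonal (P ∘ g)`; Weinstein–Aronszajn turns
  -- `det (1 + D⁻¹ * U * V)` into the `κ × κ` determinant `det (1 + V * (D⁻¹ * U))`.
  let U : Matrix ι κ K := of fun i l => E (g i) l
  let V : Matrix κ ι K := of fun k j => if g j = k then 1 else 0
  let Dinv : Matrix ι ι K := diagonal fun i => (P (g i))⁻¹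
  have hUV : (of fun i j => E (g i) (g j)) = U * V := by
    ext i j; simp [U, V, mul_apply]
  have hleft : diagonal (P ∘ g) + U * V = diagonal (P ∘ g) * (1 + Dinv * U * V) := by
    rw [Matrix.mul_add, Matrix.mul_one, ← Matrix.mul_assoc, ← Matrix.mul_assoc,
      diagonal_mul_diagonal]
    simp [hP]
  have hright : (diagonal P + of fun k l => (#{i | g i = k} : K) * E k l) =
      diagonal P * (1 + V * (Dinv * U)) := by
    ext k l
    have hfiber : ∑ i with g i = k, (P (g i))⁻¹ * E (g i) l =
        (P k)⁻¹ * (#{i | g i = k} * E k l) := by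
      rw [Finset.sum_congr rfl fun i hi => by rw [(mem_filter.mp hi).2], sum_const, nsmul_eq_mul,
        mul_left_comm]
    simp only [U, V, Dinv, Matrix.add_apply, diagonal_apply, of_apply, mul_apply, ite_mul, zero_mul,
      sum_ite_eq, mem_univ, ↓reduceIte, one_mul, sum_ite, sum_const_zero, add_zero]
    rw [hfiber, mul_add, mul_inv_cancel_left₀ (hP k), one_apply, mul_ite, mul_one, mul_zero]
  rw [hUV, hleft, hright, det_mul, det_mul, det_one_add_mul_comm (Dinv * U) V,
    det_diagonal, det_diagonal, Function.comp_def, prod_comp_eq_prod_pow_card g P]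
  ring

theorem det_diagonal_comp_add {R : Type*} [CommRing R] [IsDomain R] (g : ι → κ)
    (hg : Function.Surjective g) (P : κ → R) (E : κ → κ → R) (hP : ∀ k, P k ≠ 0) :
    (diagonal (P ∘ g) + of fun i j => E (g i) (g j)).det =
      (∏ k, P k ^ (#{i | g i = k} - 1)) *
        (diagonal P + of fun k l => (#{i | g i = k} : R) * E k l).det := by
  let φ := algebraMap R (FractionRing R)
  have hφ : Function.Injective φ := IsFractionRing.injective R (FractionRing R)
  have hφP : ∀ k, φ (P k) ≠ 0 := fun k => (map_ne_zero_iff φ hφ).mpr (hP k)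
  have hfiber : ∀ k, #{i | g i = k} ≠ 0 := fun k => by
    obtain ⟨i, rfl⟩ := hg k
    exact card_ne_zero_of_mem (mem_filter.mpr ⟨mem_univ i, rfl⟩)
  have hφdet := det_diagonal_comp_add_mul_prod g (φ ∘ P) (fun k l => φ (E k l)) hφP
  simp only [← pow_sub_one_mul (hfiber _), prod_mul_distrib] at hφdet
  apply hφ
  simp only [RingHom.map_det, map_mul, map_prod, map_pow, RingHom.mapMatrix_apply,
    map_diagonal_add_of, map_natCast]
  refine mul_right_cancel₀ (b := ∏ k, φ (P k)) (prod_ne_zero_iff.mpr fun k _ => hφP k) ?_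
  exact hφdet.trans (mul_right_comm _ _ _)

end ClusterDeterminant

section BlockCharpoly

variable {n m R : Type*} [Fintype n] [Fintype m] [DecidableEq n] [DecidableEq m] [CommRing R]

theorem det_fromBlocks_smul_one_mul_pow (A : Matrix n n R) (B : Matrix n m R)
    (C : Matrix m n R) (d : R) :
    (fromBlocks A B C (d • 1)).det * d ^ Fintype.card n =
      (d • A - B * C).det * d ^ Fintype.card m := by
  have hfactor : fromBlocks A B C (d • 1) * fromBlocks (d • 1) 0 (-C) 1 =
      fromBlocks (d • A - B * C) B 0 (d • 1) := by
    simp [fromBlocks_multiply, Matrix.mul_smul, Matrix.smul_mul, sub_eq_add_neg]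
  have hdet := congrArg det hfactor
  rw [det_mul, det_fromBlocks_zero₁₂, det_fromBlocks_zero₂₁] at hdet
  simpa [det_smul] using hdet

theorem charpoly_fromBlocks_neg_smul_one_mul_pow (A : Matrix n n R) (B : Matrix n m R)
    (C : Matrix m n R) (ε : R) :
    (fromBlocks A B C (-(ε • 1))).charpoly * (X + Polynomial.C ε) ^ Fintype.card n =
      ((X + Polynomial.C ε) • charmatrix A - (B * C).map Polynomial.C).det *
        (X + Polynomial.C ε) ^ Fintype.card m := by
  have hD : charmatrix (-(ε • 1 : Matrix m m R)) = (X + Polynomial.C ε) • 1 := by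
    ext i j
    rcases eq_or_ne i j with rfl | h <;> simp [charmatrix_apply_eq, *]
  rw [charpoly, charmatrix_fromBlocks, hD, det_fromBlocks_smul_one_mul_pow, Matrix.neg_mul,
    Matrix.mul_neg, neg_neg, ← Matrix.map_mul]

end BlockCharpoly

theorem sin_two_mul_sub_add_of_antipodal {x y u v c : ℝ} (hx : x = u ∨ x = u + π)
    (hy : y = v ∨ y = v + π) : sin (2 * (x - y) + c) = sin (2 * (u - v) + c) := by
  rcases hx with hx | hx <;> rcases hy with hy | hy <;> rw [hx, hy]
  · rw [show 2 * (u - (v + π)) + c = 2 * (u - v) + c - 2 * π by ring, sin_sub_two_pi]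
  · rw [show 2 * (u + π - v) + c = 2 * (u - v) + c + 2 * π by ring, sin_add_two_pi]
  · ring_nf

/-- The quadratics `P₁, P₂, P₃` of the theorem are `modePoly (sin (α - β)) ε m` for suitable
weighted means `m` of `sin (2 (aᵢ - aⱼ) + α + β)`. -/
noncomputable def modePoly (δ ε m : ℝ) : ℝ[X] :=
  X ^ 2 + C (1 / 2 * (δ - m + 2 * ε)) * X - C (ε * m)

noncomputable def couplingPoly (δ ε n s : ℝ) : ℝ[X] :=
  C ((s - δ) / (2 * n)) * X + C (ε * s / n)

/-- `(X + ε)` times the Schur complement of the coupling block `(X + ε) • 1` in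
`charmatrix (linJ N α β ε a)`. -/
noncomputable def linSchur (N : ℕ) (α β ε : ℝ) (a : Fin N → ℝ) :
    Matrix (Fin N) (Fin N) ℝ[X] :=
  (X + C ε) • charmatrix (linA N α β a) - (linB N α a * linC N β ε a).map C

theorem modePoly_monic (δ ε m : ℝ) : (modePoly δ ε m).Monic := by
  unfold modePoly; monicity!

theorem modePoly_one_div_mul_add (δ ε n r1 r2 s t : ℝ) :
    modePoly δ ε (1 / n * (r1 * s + r2 * t)) =
      X ^ 2 + C (1 / 2 * (δ - r1 / n * s - r2 / n * t + 2 * ε)) * X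
        - C (ε * (r1 / n) * s + ε * (r2 / n) * t) := by
  unfold modePoly
  congr 3
  · congr 1; ring
  · ring

theorem modePoly_two_cluster_det (δ ε s0 sm sp : ℝ) {n r1 r2 : ℕ} (hn : n ≠ 0)
    (hr : r1 + r2 = n) :
    (modePoly δ ε (1 / n * (r1 * s0 + r2 * sm)) + (r1 : ℝ[X]) * couplingPoly δ ε n s0) *
        (modePoly δ ε (1 / n * (r1 * sp + r2 * s0)) + (r2 : ℝ[X]) * couplingPoly δ ε n s0) -
      (r1 : ℝ[X]) * couplingPoly δ ε n sm * ((r2 : ℝ[X]) * couplingPoly δ ε n sp) =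
    X * (X + C ε) * modePoly δ ε (1 / n * (r1 * sp + r2 * sm)) := by
  have hn' : (n : ℝ) ≠ 0 := Nat.cast_ne_zero.mpr hn
  have hr2 : (r2 : ℝ) = n - r1 := by rw [← hr, Nat.cast_add]; ring
  apply Polynomial.funext; intro x
  simp only [modePoly, couplingPoly, eval_add, eval_sub, eval_mul, eval_pow, eval_X, eval_C,
    eval_natCast, hr2]
  field_simp
  ring

section Linearization

variable {N : ℕ} (α β ε : ℝ) (a : Fin N → ℝ)

theorem linA_apply (i j : Fin N) :
    linA N α β a i j =
      (if i = j then -sin (α - β) / 2 + 1 / (2 * N) * ∑ k, sin (2 * (a i - a k) + α + β)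
        else 0) + 1 / (2 * N) * (sin (α - β) - sin (2 * (a i - a j) + α + β)) := by
  rcases eq_or_ne i j with rfl | h
  · have hsc : sin β * cos α = (sin (α + β) - sin (α - β)) / 2 := by
      rw [sin_add, sin_sub]; ring
    simp only [linA, of_apply, if_true, sub_self, mul_zero, zero_add, mul_assoc, hsc]
    ring
  · simp [linA, h]

theorem linB_mul_linC_apply (i j : Fin N) :
    (linB N α a * linC N β ε a) i j =
      ε / (2 * N) *
        ((if i = j then ∑ k, (sin (2 * (a i - a k) + α + β) + sin (α - β)) else 0) -
          (sin (2 * (a i - a j) + α + β) + sin (α - β))) := by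
  set t : Fin N → ℝ := fun k => sin (2 * (a i - a k) + α + β) + sin (α - β) with ht
  have hsc : ∀ k, sin (a i - a k + α) * cos (a i - a k + β) = t k / 2 := fun k => by
    have h := two_mul_sin_mul_cos (a i - a k + α) (a i - a k + β)
    rw [show a i - a k + α - (a i - a k + β) = α - β by ring,
      show a i - a k + α + (a i - a k + β) = 2 * (a i - a k) + α + β by ring] at h
    linear_combination h / 2
  have hterm : ∀ k, linB N α a i (i, k) * linC N β ε a (i, k) j =
      ε / (2 * N) * ((if i = j then t k else 0) - (if k = j then t k else 0)) := fun k => by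
    rcases eq_or_ne i k with rfl | hik
    · simp [linC]
    simp only [linB, linC, of_apply, if_true, if_neg hik]
    rcases eq_or_ne j i with rfl | hji
    · simp only [if_true, if_neg hik.symm, sub_zero]
      linear_combination ε / N * hsc k
    rcases eq_or_ne j k with rfl | hjk
    · simp only [if_neg hji, if_neg hik, if_true, zero_sub]
      linear_combination -ε / N * hsc j
    · simp [hji, hjk, hji.symm, hjk.symm]
  have hrow : ∀ p : Fin N × Fin N, p.1 ≠ i → linB N α a i p = 0 := fun p hp => by
    simp [linB, Ne.symm hp]
  rw [mul_apply, Fintype.sum_prod_type, Finset.sum_eq_single i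
    (fun p _ hp => sum_eq_zero fun k _ => by rw [hrow (p, k) hp, zero_mul])
    (fun h => absurd (mem_univ i) h), sum_congr rfl fun k _ => hterm k, ← mul_sum,
    sum_sub_distrib, sum_ite_eq', if_pos (mem_univ j)]
  by_cases hij : i = j <;> simp [hij, ht]

theorem charpoly_linJ_mul_pow :
    (linJ N α β ε a).charpoly * (X + C ε) ^ N =
      (linSchur N α β ε a).det * (X + C ε) ^ (N * N) := by
  simpa [linJ, linSchur] using
    charpoly_fromBlocks_neg_smul_one_mul_pow (linA N α β a) (linB N α a) (linC N β ε a) ε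

theorem linSchur_apply (i j : Fin N) :
    linSchur N α β ε a i j =
      (if i = j then modePoly (sin (α - β)) ε (1 / N * ∑ k, sin (2 * (a i - a k) + α + β))
        else 0) + couplingPoly (sin (α - β)) ε N (sin (2 * (a i - a j) + α + β)) := by
  have hN : (N : ℝ) ≠ 0 := Nat.cast_ne_zero.mpr (Fin.pos i).ne'
  rw [linSchur, Matrix.sub_apply, Matrix.smul_apply, charmatrix_apply, map_apply, linA_apply,
    linB_mul_linC_apply, sum_add_distrib, sum_const, card_univ, Fintype.card_fin, nsmul_eq_mul,
    diagonal_apply]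
  split_ifs
  all_goals
    refine Polynomial.funext fun x => ?_
    simp only [modePoly, couplingPoly, smul_eq_mul, eval_add, eval_sub, eval_mul, eval_pow,
      eval_X, eval_C, eval_zero]
    field_simp
    ring

theorem linSchur_eq_of_clusters {κ : Type*} [Fintype κ] [DecidableEq κ] (g : Fin N → κ)
    (σ : κ → κ → ℝ) (hσ : ∀ i j, sin (2 * (a i - a j) + α + β) = σ (g i) (g j)) :
    linSchur N α β ε a =
      diagonal
          ((fun k => modePoly (sin (α - β)) ε (1 / N * ∑ l, #{i | g i = l} * σ k l)) ∘ g) +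
        of fun i j => couplingPoly (sin (α - β)) ε N (σ (g i) (g j)) := by
  ext i j : 1
  simp only [linSchur_apply, hσ, sum_comp_eq_sum_nsmul_card g (σ (g i)), nsmul_eq_mul,
    Matrix.add_apply, diagonal_apply, Function.comp_apply, of_apply]

theorem det_linSchur_of_clusters {κ : Type*} [Fintype κ] [DecidableEq κ] (g : Fin N → κ)
    (hg : Function.Surjective g) (σ : κ → κ → ℝ)
    (hσ : ∀ i j, sin (2 * (a i - a j) + α + β) = σ (g i) (g j)) :
    (linSchur N α β ε a).det =
      (∏ k, modePoly (sin (α - β)) ε (1 / N * ∑ l, #{i | g i = l} * σ k l)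
          ^ (#{i | g i = k} - 1)) *
        (diagonal (fun k => modePoly (sin (α - β)) ε (1 / N * ∑ l, #{i | g i = l} * σ k l)) +
          of fun k l => (#{i | g i = k} : ℝ[X]) *
            couplingPoly (sin (α - β)) ε N (σ k l)).det := by
  rw [linSchur_eq_of_clusters α β ε a g σ hσ]
  exact det_diagonal_comp_add g hg _ (fun k l => couplingPoly (sin (α - β)) ε N (σ k l))
    fun k => (modePoly_monic _ _ _).ne_zero

end Linearization

theorem sin_two_mul_sub_add_double_antipodal {N : ℕ} {a : Fin N → ℝ} {S : Finset (Fin N)}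
    {ψ : ℝ} (α β : ℝ) (haS : ∀ i ∈ S, a i = 0 ∨ a i = π)
    (haSc : ∀ i ∉ S, a i = ψ ∨ a i = ψ + π) (i j : Fin N) :
    sin (2 * (a i - a j) + α + β) =
      ![![sin (α + β), sin (-2 * ψ + α + β)], ![sin (2 * ψ + α + β), sin (α + β)]]
        (if i ∈ S then 0 else 1) (if j ∈ S then 0 else 1) := by
  have ha : ∀ k, a k = (if k ∈ S then 0 else ψ) ∨ a k = (if k ∈ S then 0 else ψ) + π := by
    intro k
    by_cases hk : k ∈ S
    · simpa [hk] using haS k hk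
    · simpa [hk] using haSc k hk
  rw [add_assoc, sin_two_mul_sub_add_of_antipodal (ha i) (ha j), ← add_assoc]
  by_cases hi : i ∈ S <;> by_cases hj : j ∈ S <;> simp [hi, hj]

theorem det_linSchur_double_antipodal {N Q1 Q2 : ℕ} (α β ψ ε : ℝ) (hQ1 : 1 ≤ Q1)
    (hQ2 : 1 ≤ Q2) (hQ : Q1 + Q2 = N) {a : Fin N → ℝ} {S : Finset (Fin N)} (hS : #S = Q1)
    (haS : ∀ i ∈ S, a i = 0 ∨ a i = π) (haSc : ∀ i ∉ S, a i = ψ ∨ a i = ψ + π) :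
    (linSchur N α β ε a).det =
      X * (X + C ε) *
        modePoly (sin (α - β)) ε (1 / N * (Q1 * sin (α + β) + Q2 * sin (-2 * ψ + α + β)))
          ^ (Q1 - 1) *
        modePoly (sin (α - β)) ε (1 / N * (Q1 * sin (2 * ψ + α + β) + Q2 * sin (α + β)))
          ^ (Q2 - 1) *
        modePoly (sin (α - β)) ε
          (1 / N * (Q1 * sin (2 * ψ + α + β) + Q2 * sin (-2 * ψ + α + β))) := by
  set g : Fin N → Fin 2 := fun i => if i ∈ S then 0 else 1
  have hcard0 : #{i | g i = 0} = Q1 := by simp [g, hS]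
  have hcard1 : #{i | g i = 1} = Q2 := by
    rw [show #{i | g i = 1} = #Sᶜ by congr 1; ext i; simp [g], card_compl, Fintype.card_fin, hS]
    omega
  have hg : Function.Surjective g := by
    have hne : ∀ k, #{i | g i = k} ≠ 0 := Fin.forall_fin_two.mpr ⟨by omega, by omega⟩
    intro k
    obtain ⟨i, hi⟩ := card_ne_zero.mp (hne k)
    exact ⟨i, (mem_filter.mp hi).2⟩
  rw [det_linSchur_of_clusters α β ε a g hg _
      (sin_two_mul_sub_add_double_antipodal α β haS haSc), det_fin_two, Fin.prod_univ_two]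
  simp only [Fin.sum_univ_two, hcard0, hcard1, Matrix.add_apply, diagonal_apply_eq,
    diagonal_apply_ne _ Fin.zero_ne_one, diagonal_apply_ne _ Fin.zero_ne_one.symm, of_apply,
    cons_val_zero, cons_val_one, zero_add, modePoly_two_cluster_det _ _ _ _ _ (by omega) hQ]
  ring

theorem charpoly_double_antipodal_general
    (N : ℕ) (α β ψ ε : ℝ)
    (Q1 Q2 : ℕ) (hQ1 : 1 ≤ Q1) (hQ2 : 1 ≤ Q2) (hQ : Q1 + Q2 = N)
    (q1 q2 : ℝ) (hq1 : q1 = (Q1 : ℝ) / (N : ℝ)) (hq2 : q2 = (Q2 : ℝ) / (N : ℝ))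
    (a : Fin N → ℝ) (S : Finset (Fin N)) (hS : S.card = Q1)
    (haS : ∀ i ∈ S, a i = 0 ∨ a i = Real.pi)
    (haSc : ∀ i ∉ S, a i = ψ ∨ a i = ψ + Real.pi) :
    (linJ N α β ε a).charpoly =
      X * (X + C ε) ^ (N * (N - 1) + 1) *
        (X ^ 2
          + C ((1 / 2) * (Real.sin (α - β) - q1 * Real.sin (α + β)
              - q2 * Real.sin (-2 * ψ + α + β) + 2 * ε)) * X
          - C (ε * q1 * Real.sin (α + β) + ε * q2 * Real.sin (-2 * ψ + α + β)))
          ^ (Q1 - 1) *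
        (X ^ 2
          + C ((1 / 2) * (Real.sin (α - β) - q1 * Real.sin (2 * ψ + α + β)
              - q2 * Real.sin (α + β) + 2 * ε)) * X
          - C (ε * q1 * Real.sin (2 * ψ + α + β) + ε * q2 * Real.sin (α + β)))
          ^ (Q2 - 1) *
        (X ^ 2
          + C ((1 / 2) * (Real.sin (α - β) - q1 * Real.sin (2 * ψ + α + β)
              - q2 * Real.sin (-2 * ψ + α + β) + 2 * ε)) * X
          - C (ε * q1 * Real.sin (2 * ψ + α + β)
              + ε * q2 * Real.sin (-2 * ψ + α + β))) := by
  subst hq1 hq2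
  refine mul_right_cancel₀ (pow_ne_zero N (X_add_C_ne_zero ε)) ?_
  rw [charpoly_linJ_mul_pow, det_linSchur_double_antipodal α β ψ ε hQ1 hQ2 hQ hS haS haSc,
    show N * N = N * (N - 1) + N by rw [Nat.mul_sub_one, Nat.sub_add_cancel (Nat.le_mul_self N)]]
  simp only [modePoly_one_div_mul_add]
  ring

/-- The characteristic polynomial of the linearization at a double antipodal one-cluster
state with `Q1` phases in `{0, π}` and `Q2` phases in `{ψ, ψ + π}`. -/
theorem charpoly_double_antipodal
    (N : ℕ) (hN : 2 ≤ N) (α β ψ ε : ℝ) (hε : 0 < ε)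
    (Q1 Q2 : ℕ) (hQ1 : 1 ≤ Q1) (hQ2 : 1 ≤ Q2) (hQ : Q1 + Q2 = N)
    (q1 q2 : ℝ) (hq1 : q1 = (Q1 : ℝ) / (N : ℝ)) (hq2 : q2 = (Q2 : ℝ) / (N : ℝ))
    (a : Fin N → ℝ) (S : Finset (Fin N)) (hS : S.card = Q1)
    (haS : ∀ i ∈ S, a i = 0 ∨ a i = Real.pi)
    (haSc : ∀ i ∉ S, a i = ψ ∨ a i = ψ + Real.pi) :
    (linJ N α β ε a).charpoly =
      X * (X + C ε) ^ (N * (N - 1) + 1) *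
        (X ^ 2
          + C ((1 / 2) * (Real.sin (α - β) - q1 * Real.sin (α + β)
              - q2 * Real.sin (-2 * ψ + α + β) + 2 * ε)) * X
          - C (ε * q1 * Real.sin (α + β) + ε * q2 * Real.sin (-2 * ψ + α + β)))
          ^ (Q1 - 1) *
        (X ^ 2
          + C ((1 / 2) * (Real.sin (α - β) - q1 * Real.sin (2 * ψ + α + β)
              - q2 * Real.sin (α + β) + 2 * ε)) * X
          - C (ε * q1 * Real.sin (2 * ψ + α + β) + ε * q2 * Real.sin (α + β)))
          ^ (Q2 - 1) *
        (X ^ 2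
          + C ((1 / 2) * (Real.sin (α - β) - q1 * Real.sin (2 * ψ + α + β)
              - q2 * Real.sin (-2 * ψ + α + β) + 2 * ε)) * X
          - C (ε * q1 * Real.sin (2 * ψ + α + β)
              + ε * q2 * Real.sin (-2 * ψ + α + β))) :=
  charpoly_double_antipodal_general N α β ψ ε Q1 Q2 hQ1 hQ2 hQ q1 q2 hq1 hq2 a S hS haS haSc
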